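/- arXiv:1009.5422 — 3 statements merged into one kernel-verified Lean document; each statement's English description precedes it below -/
import Mathlib

section
/- There exists a constant C₂ > 0 depending only on ρ₊, ρ₋ and g such that for every frequency ξ ≠ 0 there exists a constant C₃ > 0 (depending on ρ₊, ρ₋, μ₊, μ₋ and ξ) with α(s) ≥ −C₂|ξ| + C₃ s for all s > 0. -/
open MeasureTheory Set Filter Topology

noncomputable section

/-- The set of Rayleigh quotients defining the critical magnetic number `|B|_c`. -/
def BcSet (g ρp ρm : ℝ) : Set ℝ :=
  {r | ∃ φ : ℝ → ℝ, (∃ K, LipschitzWith K φ) ∧ φ (-1) = 0 ∧ φ 1 = 0 ∧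
    ¬ (∀ᵐ y ∂(volume.restrict (Icc (-1:ℝ) 1)), φ y = 0) ∧
    r = g * (ρp - ρm) * (φ 0) ^ 2 / ∫ y in (-1:ℝ)..1, (deriv φ y) ^ 2}

/-- The set of quotients defining the vertical critical frequency `|ξ|_{vc}^B`. -/
def XivcSet (g ρp ρm B : ℝ) : Set ℝ :=
  {r | ∃ φ : ℝ → ℝ, ContDiff ℝ 2 φ ∧ φ (-1) = 0 ∧ φ 1 = 0 ∧
    deriv φ (-1) = 0 ∧ deriv φ 1 = 0 ∧
    0 < g * (ρp - ρm) * (φ 0) ^ 2 - B ^ 2 * ∫ y in (-1:ℝ)..1, (deriv φ y) ^ 2 ∧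
    r = (B ^ 2 * ∫ y in (-1:ℝ)..1, (deriv (deriv φ) y) ^ 2) /
        (g * (ρp - ρm) * (φ 0) ^ 2 - B ^ 2 * ∫ y in (-1:ℝ)..1, (deriv φ y) ^ 2)}

/-- The set of quotients defining the horizontal critical frequency `|ξ|_{hc}^B`. -/
def XihcSet (g ρp ρm B : ℝ) : Set ℝ :=
  {r | ∃ φ : ℝ → ℝ, (∃ K, LipschitzWith K φ) ∧ φ (-1) = 0 ∧ φ 1 = 0 ∧
    ¬ (∀ᵐ y ∂(volume.restrict (Icc (-1:ℝ) 1)), φ y = 0) ∧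
    r = (g * (ρp - ρm) * (φ 0) ^ 2 - B ^ 2 * ∫ y in (-1:ℝ)..1, (deriv φ y) ^ 2) /
        (B ^ 2 * ∫ y in (-1:ℝ)..1, (φ y) ^ 2)}

/-- The magnetic part `E₀` of the energy of the vertical problem. -/
def E0 (g ρp ρm B ξ : ℝ) (ψ : ℝ → ℝ) : ℝ :=
  (1/2) * (∫ y in (-1:ℝ)..1, B ^ 2 * ((deriv ψ y) ^ 2 + (deriv (deriv ψ) y) ^ 2 / ξ ^ 2)) -
    (1/2) * (g * (ρp - ρm)) * (ψ 0) ^ 2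

/-- The viscous part `E₁` of the energy, with piecewise viscosity `μ₊` above, `μ₋` below. -/
def E1 (μp μm ξ : ℝ) (ψ : ℝ → ℝ) : ℝ :=
  (1/2) * ∫ y in (-1:ℝ)..1,
    (if 0 < y then μp else μm) *
      (4 * ξ ^ 2 * (deriv ψ y) ^ 2 + (ξ ^ 2 * ψ y + deriv (deriv ψ) y) ^ 2)

/-- The normalization functional `J`, with piecewise density `ρ₊` above, `ρ₋` below. -/
def Jfun (ρp ρm ξ : ℝ) (ψ : ℝ → ℝ) : ℝ :=
  (1/2) * ∫ y in (-1:ℝ)..1,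
    (if 0 < y then ρp else ρm) * (ξ ^ 2 * (ψ y) ^ 2 + (deriv ψ y) ^ 2)

/-- `ψ` is an admissible test function: `C²` with vanishing boundary values of `ψ` and `ψ'`. -/
def Adm (ψ : ℝ → ℝ) : Prop :=
  ContDiff ℝ 2 ψ ∧ ψ (-1) = 0 ∧ ψ 1 = 0 ∧ deriv ψ (-1) = 0 ∧ deriv ψ 1 = 0

/-- `α(s)`: the infimum of the modified energy `E(ψ;s) = ξ²E₀(ψ) + sE₁(ψ)` over admissible
`ψ` normalized by `J(ψ) = 1`. -/
def alpha (ρp ρm μp μm g B ξ s : ℝ) : ℝ :=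
  sInf {r : ℝ | ∃ ψ : ℝ → ℝ, Adm ψ ∧ Jfun ρp ρm ξ ψ = 1 ∧
    r = ξ ^ 2 * E0 g ρp ρm B ξ ψ + s * E1 μp μm ξ ψ}

/-! For `ψ` vanishing at `-1`, the fundamental theorem of calculus and AM–GM give the trace
estimate `ψ(t)² ≤ ε ∫ ψ² + ε⁻¹ ∫ ψ'²`. Since `ρ₋ ≤ ρ ≤ ρ₊`, the constraint `J(ψ) = 1` pins
`ξ² ∫ ψ² + ∫ ψ'²` between `2/ρ₊` and `2/ρ₋`. With `ε = |ξ|` the trace estimate gives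
`ξ² ψ(0)² ≤ 2|ξ|/ρ₋`, which bounds the only negative term of `ξ² E₀` by `C₂ |ξ|` with
`C₂ = g[ρ]/ρ₋`. With `ε` of order one it gives the Poincaré inequality `∫ ψ² ≤ 16 ∫ ψ'²`, hence
`∫ ψ'² ≥ 2/(ρ₊(16ξ² + 1))`, and `E₁ ≥ 2 min(μ₊, μ₋) ξ² ∫ ψ'²` produces `C₃ s`. -/

section StepWeight

variable {a b : ℝ} (c₁ c₂ : ℝ)

lemma intervalIntegrable_step :
    IntervalIntegrable (fun y : ℝ => if 0 < y then c₁ else c₂) volume a b := by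
  refine intervalIntegrable_iff.2 (Measure.integrableOn_of_bounded (M := max |c₁| |c₂|) ?_ ?_ ?_)
  · simp
  · exact (Measurable.ite measurableSet_Ioi measurable_const measurable_const).aestronglyMeasurable
  · exact Filter.Eventually.of_forall fun y => by split_ifs <;> simp

lemma intervalIntegrable_step_mul {f : ℝ → ℝ} (hf : Continuous f) :
    IntervalIntegrable (fun y => (if 0 < y then c₁ else c₂) * f y) volume a b :=
  (intervalIntegrable_step c₁ c₂).mul_continuousOn hf.continuousOn

variable {c₁ c₂} {f : ℝ → ℝ} {c : ℝ}

lemma mul_integral_le_integral_step_mul (hab : a ≤ b) (hf : Continuous f) (hf₀ : ∀ y, 0 ≤ f y)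
    (h₁ : c ≤ c₁) (h₂ : c ≤ c₂) :
    c * ∫ y in a..b, f y ≤ ∫ y in a..b, (if 0 < y then c₁ else c₂) * f y := by
  rw [← intervalIntegral.integral_const_mul]
  refine intervalIntegral.integral_mono_on hab ((hf.const_mul c).intervalIntegrable _ _)
    (intervalIntegrable_step_mul c₁ c₂ hf) fun y _ => ?_
  exact mul_le_mul_of_nonneg_right (by split_ifs <;> assumption) (hf₀ y)

lemma integral_step_mul_le_mul_integral (hab : a ≤ b) (hf : Continuous f) (hf₀ : ∀ y, 0 ≤ f y)
    (h₁ : c₁ ≤ c) (h₂ : c₂ ≤ c) :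
    ∫ y in a..b, (if 0 < y then c₁ else c₂) * f y ≤ c * ∫ y in a..b, f y := by
  rw [← intervalIntegral.integral_const_mul]
  refine intervalIntegral.integral_mono_on hab (intervalIntegrable_step_mul c₁ c₂ hf)
    ((hf.const_mul c).intervalIntegrable _ _) fun y _ => ?_
  exact mul_le_mul_of_nonneg_right (by split_ifs <;> assumption) (hf₀ y)

end StepWeight

section Trace

variable {ψ : ℝ → ℝ} {a b : ℝ}

lemma integral_sq_add_sq (hψ : Continuous ψ) (hψ' : Continuous (deriv ψ)) (κ ν : ℝ) :
    ∫ y in a..b, (κ * ψ y ^ 2 + ν * deriv ψ y ^ 2)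
      = κ * (∫ y in a..b, ψ y ^ 2) + ν * ∫ y in a..b, deriv ψ y ^ 2 := by
  rw [intervalIntegral.integral_add
      ((by fun_prop : Continuous fun y => κ * ψ y ^ 2).intervalIntegrable _ _)
      ((by fun_prop : Continuous fun y => ν * deriv ψ y ^ 2).intervalIntegrable _ _),
    intervalIntegral.integral_const_mul, intervalIntegral.integral_const_mul]

lemma sq_le_of_eq_zero_left (hψ : Differentiable ℝ ψ) (hψ' : Continuous (deriv ψ))
    (ha : ψ a = 0) {ε : ℝ} (hε : 0 < ε) {t : ℝ} (ht : t ∈ Icc a b) :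
    ψ t ^ 2 ≤ ε * (∫ y in a..b, ψ y ^ 2) + ε⁻¹ * ∫ y in a..b, deriv ψ y ^ 2 := by
  have hg : Continuous fun y => ε * ψ y ^ 2 + ε⁻¹ * deriv ψ y ^ 2 := by
    have := hψ.continuous; fun_prop
  have hf : Continuous fun y => 2 * ψ y * deriv ψ y := by
    have := hψ.continuous; fun_prop
  have hftc : ψ t ^ 2 = ∫ y in a..t, 2 * ψ y * deriv ψ y := by
    rw [intervalIntegral.integral_eq_sub_of_hasDerivAt (f := fun y => ψ y ^ 2)
      (fun y _ => by simpa using (hψ y).hasDerivAt.fun_pow 2) (hf.intervalIntegrable _ _), ha]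
    ring
  have hpointwise : ∀ y, 2 * ψ y * deriv ψ y ≤ ε * ψ y ^ 2 + ε⁻¹ * deriv ψ y ^ 2 := fun y => by
    have key : ε * ψ y ^ 2 + ε⁻¹ * deriv ψ y ^ 2 - 2 * ψ y * deriv ψ y
        = (ε * ψ y - deriv ψ y) ^ 2 / ε := by
      field_simp; ring
    linarith [div_nonneg (sq_nonneg (ε * ψ y - deriv ψ y)) hε.le]
  calc ψ t ^ 2 = ∫ y in a..t, 2 * ψ y * deriv ψ y := hftc
    _ ≤ ∫ y in a..t, (ε * ψ y ^ 2 + ε⁻¹ * deriv ψ y ^ 2) :=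
      intervalIntegral.integral_mono_on ht.1 (hf.intervalIntegrable _ _)
        (hg.intervalIntegrable _ _) fun y _ => hpointwise y
    _ ≤ ∫ y in a..b, (ε * ψ y ^ 2 + ε⁻¹ * deriv ψ y ^ 2) := by
      rw [← intervalIntegral.integral_add_adjacent_intervals
        (hg.intervalIntegrable a t) (hg.intervalIntegrable t b)]
      have : 0 ≤ ∫ y in t..b, (ε * ψ y ^ 2 + ε⁻¹ * deriv ψ y ^ 2) :=
        intervalIntegral.integral_nonneg ht.2 fun y _ => by positivity
      linarith
    _ = _ := integral_sq_add_sq hψ.continuous hψ' ε ε⁻¹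

lemma integral_sq_le_of_eq_zero_left (hab : a < b) (hψ : Differentiable ℝ ψ)
    (hψ' : Continuous (deriv ψ)) (ha : ψ a = 0) :
    ∫ y in a..b, ψ y ^ 2 ≤ 4 * (b - a) ^ 2 * ∫ y in a..b, deriv ψ y ^ 2 := by
  set P := ∫ y in a..b, ψ y ^ 2
  set D := ∫ y in a..b, deriv ψ y ^ 2
  have hL : 0 < b - a := sub_pos.2 hab
  have hε : 0 < (2 * (b - a))⁻¹ := by positivity
  have hP : P ≤ (b - a) * ((2 * (b - a))⁻¹ * P + (2 * (b - a))⁻¹⁻¹ * D) := by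
    have hc : Continuous fun y => ψ y ^ 2 := by have := hψ.continuous; fun_prop
    have := intervalIntegral.integral_mono_on hab.le (hc.intervalIntegrable _ _)
      (intervalIntegrable_const (μ := volume)) fun t ht => sq_le_of_eq_zero_left hψ hψ' ha hε ht
    rwa [intervalIntegral.integral_const, smul_eq_mul] at this
  have : (b - a) * ((2 * (b - a))⁻¹ * P + (2 * (b - a))⁻¹⁻¹ * D) = P / 2 + 2 * (b - a) ^ 2 * D := by
    field_simp
  linarith

end Trace

namespace Adm

variable {ψ : ℝ → ℝ}

lemma differentiable (hψ : Adm ψ) : Differentiable ℝ ψ := hψ.1.differentiable (by norm_num)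

lemma continuous_deriv (hψ : Adm ψ) : Continuous (deriv ψ) :=
  hψ.1.continuous_deriv (by norm_num)

lemma continuous_deriv_deriv (hψ : Adm ψ) : Continuous (deriv (deriv ψ)) :=
  ((contDiff_succ_iff_deriv (n := 1)).mp hψ.1).2.2.continuous_deriv le_rfl

lemma const_mul (hψ : Adm ψ) (c : ℝ) : Adm fun y => c * ψ y := by
  have hd : deriv (fun y => c * ψ y) = fun y => c * deriv ψ y :=
    funext fun y => deriv_const_mul c (hψ.differentiable y)
  obtain ⟨hC, h₁, h₂, h₃, h₄⟩ := hψ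
  exact ⟨contDiff_const.mul hC, by simp [h₁], by simp [h₂], by simp [hd, h₃], by simp [hd, h₄]⟩

end Adm

section Functionals

variable {ρp ρm ξ : ℝ} {ψ : ℝ → ℝ}

lemma Jfun_const_mul (hψ : Differentiable ℝ ψ) (c : ℝ) :
    Jfun ρp ρm ξ (fun y => c * ψ y) = c ^ 2 * Jfun ρp ρm ξ ψ := by
  have hd : deriv (fun y => c * ψ y) = fun y => c * deriv ψ y :=
    funext fun y => deriv_const_mul c (hψ y)
  have hpt : ∀ y, (if 0 < y then ρp else ρm) * (ξ ^ 2 * (c * ψ y) ^ 2 + (c * deriv ψ y) ^ 2)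
      = c ^ 2 * ((if 0 < y then ρp else ρm) * (ξ ^ 2 * ψ y ^ 2 + deriv ψ y ^ 2)) := fun y => by
    ring
  simp only [Jfun, hd, hpt, intervalIntegral.integral_const_mul]
  ring

lemma mul_le_Jfun (hρ : ρm ≤ ρp) (hψ : Continuous ψ) (hψ' : Continuous (deriv ψ)) :
    ρm / 2 * (ξ ^ 2 * (∫ y in (-1:ℝ)..1, ψ y ^ 2) + ∫ y in (-1:ℝ)..1, deriv ψ y ^ 2)
      ≤ Jfun ρp ρm ξ ψ := by
  have h := mul_integral_le_integral_step_mul (a := -1) (b := 1) (by norm_num) (by fun_prop)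
    (fun y => by positivity) hρ le_rfl (f := fun y => ξ ^ 2 * ψ y ^ 2 + deriv ψ y ^ 2)
  have hsplit := integral_sq_add_sq (a := -1) (b := 1) hψ hψ' (ξ ^ 2) 1
  simp only [one_mul] at hsplit
  rw [hsplit] at h
  unfold Jfun
  linarith

lemma Jfun_le_mul (hρ : ρm ≤ ρp) (hψ : Continuous ψ) (hψ' : Continuous (deriv ψ)) :
    Jfun ρp ρm ξ ψ
      ≤ ρp / 2 * (ξ ^ 2 * (∫ y in (-1:ℝ)..1, ψ y ^ 2) + ∫ y in (-1:ℝ)..1, deriv ψ y ^ 2) := by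
  have h := integral_step_mul_le_mul_integral (a := -1) (b := 1) (by norm_num) (by fun_prop)
    (fun y => by positivity) le_rfl hρ (f := fun y => ξ ^ 2 * ψ y ^ 2 + deriv ψ y ^ 2)
  have hsplit := integral_sq_add_sq (a := -1) (b := 1) hψ hψ' (ξ ^ 2) 1
  simp only [one_mul] at hsplit
  rw [hsplit] at h
  unfold Jfun
  linarith

lemma neg_mul_sq_le_E0 (g B : ℝ) :
    -(1 / 2) * (g * (ρp - ρm)) * ψ 0 ^ 2 ≤ E0 g ρp ρm B ξ ψ := by
  have : 0 ≤ ∫ y in (-1:ℝ)..1, B ^ 2 * (deriv ψ y ^ 2 + deriv (deriv ψ) y ^ 2 / ξ ^ 2) :=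
    intervalIntegral.integral_nonneg (by norm_num) fun y _ => by positivity
  unfold E0
  linarith

lemma Adm.mul_integral_deriv_sq_le_E1 {μp μm : ℝ} (hμp : 0 ≤ μp) (hμm : 0 ≤ μm) (hψ : Adm ψ) :
    2 * min μp μm * ξ ^ 2 * ∫ y in (-1:ℝ)..1, deriv ψ y ^ 2 ≤ E1 μp μm ξ ψ := by
  have := hψ.differentiable.continuous
  have := hψ.continuous_deriv
  have := hψ.continuous_deriv_deriv
  have hF := mul_integral_le_integral_step_mul (a := -1) (b := 1) (by norm_num) (by fun_prop)
    (fun y => by positivity)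
    (min_le_left μp μm) (min_le_right μp μm)
    (f := fun y => 4 * ξ ^ 2 * deriv ψ y ^ 2 + (ξ ^ 2 * ψ y + deriv (deriv ψ) y) ^ 2)
  have hmono : 4 * ξ ^ 2 * ∫ y in (-1:ℝ)..1, deriv ψ y ^ 2
      ≤ ∫ y in (-1:ℝ)..1, (4 * ξ ^ 2 * deriv ψ y ^ 2 + (ξ ^ 2 * ψ y + deriv (deriv ψ) y) ^ 2) := by
    rw [← intervalIntegral.integral_const_mul]
    exact intervalIntegral.integral_mono_on (by norm_num)
      ((by fun_prop : Continuous _).intervalIntegrable _ _)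
      ((by fun_prop : Continuous _).intervalIntegrable _ _)
      fun y _ => le_add_of_nonneg_right (sq_nonneg _)
  have hmin : 0 ≤ min μp μm := le_min hμp hμm
  unfold E1
  nlinarith [mul_le_mul_of_nonneg_left hmono hmin]

end Functionals

section Normalized

variable {ρp ρm ξ : ℝ} {ψ : ℝ → ℝ}

lemma Adm.mul_sq_apply_zero_le (hψ : Adm ψ) (hJ : Jfun ρp ρm ξ ψ = 1) (hρm : 0 < ρm)
    (hρ : ρm ≤ ρp) (hξ : ξ ≠ 0) :
    ξ ^ 2 * ψ 0 ^ 2 ≤ 2 / ρm * |ξ| := by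
  set P := ∫ y in (-1:ℝ)..1, ψ y ^ 2
  set D := ∫ y in (-1:ℝ)..1, deriv ψ y ^ 2
  have hξa : 0 < |ξ| := abs_pos.2 hξ
  have htrace : ψ 0 ^ 2 ≤ |ξ| * P + |ξ|⁻¹ * D :=
    sq_le_of_eq_zero_left hψ.differentiable hψ.continuous_deriv hψ.2.1 hξa (by norm_num)
  have hweighted : |ξ| * ψ 0 ^ 2 ≤ ξ ^ 2 * P + D := by
    calc |ξ| * ψ 0 ^ 2 ≤ |ξ| * (|ξ| * P + |ξ|⁻¹ * D) := by gcongr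
      _ = ξ ^ 2 * P + D := by rw [← sq_abs ξ]; field_simp
  have hmass : ξ ^ 2 * P + D ≤ 2 / ρm := by
    rw [le_div_iff₀ hρm]
    linarith [mul_le_Jfun (ξ := ξ) hρ hψ.differentiable.continuous hψ.continuous_deriv]
  calc ξ ^ 2 * ψ 0 ^ 2 = |ξ| * (|ξ| * ψ 0 ^ 2) := by rw [← sq_abs ξ]; ring
    _ ≤ |ξ| * (2 / ρm) := by gcongr; linarith
    _ = 2 / ρm * |ξ| := mul_comm _ _

lemma Adm.le_integral_deriv_sq (hψ : Adm ψ) (hJ : Jfun ρp ρm ξ ψ = 1) (hρm : 0 < ρm)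
    (hρ : ρm ≤ ρp) :
    2 / (ρp * (16 * ξ ^ 2 + 1)) ≤ ∫ y in (-1:ℝ)..1, deriv ψ y ^ 2 := by
  set P := ∫ y in (-1:ℝ)..1, ψ y ^ 2
  set D := ∫ y in (-1:ℝ)..1, deriv ψ y ^ 2
  have hρp : 0 < ρp := hρm.trans_le hρ
  have hpoincare : P ≤ 16 * D := by
    have := integral_sq_le_of_eq_zero_left (b := 1) (by norm_num) hψ.differentiable
      hψ.continuous_deriv hψ.2.1
    norm_num at this
    exact this
  have hmass : 2 ≤ ρp * (ξ ^ 2 * P + D) := by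
    linarith [Jfun_le_mul (ξ := ξ) hρ hψ.differentiable.continuous hψ.continuous_deriv]
  rw [div_le_iff₀ (by positivity)]
  calc 2 ≤ ρp * (ξ ^ 2 * P + D) := hmass
    _ ≤ ρp * (ξ ^ 2 * (16 * D) + D) := by gcongr
    _ = D * (ρp * (16 * ξ ^ 2 + 1)) := by ring

lemma Adm.energy_ge {μp μm g B s : ℝ} (hψ : Adm ψ) (hJ : Jfun ρp ρm ξ ψ = 1) (hρm : 0 < ρm)
    (hρ : ρm ≤ ρp) (hg : 0 ≤ g) (hμp : 0 ≤ μp) (hμm : 0 ≤ μm) (hξ : ξ ≠ 0) (hs : 0 ≤ s) :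
    -(g * (ρp - ρm) / ρm) * |ξ| + 4 * min μp μm * ξ ^ 2 / (ρp * (16 * ξ ^ 2 + 1)) * s
      ≤ ξ ^ 2 * E0 g ρp ρm B ξ ψ + s * E1 μp μm ξ ψ := by
  have hG : 0 ≤ g * (ρp - ρm) := mul_nonneg hg (sub_nonneg.2 hρ)
  have hmagnetic : -(g * (ρp - ρm) / ρm) * |ξ| ≤ ξ ^ 2 * E0 g ρp ρm B ξ ψ :=
    calc -(g * (ρp - ρm) / ρm) * |ξ| = -(1 / 2) * (g * (ρp - ρm)) * (2 / ρm * |ξ|) := by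
          field_simp
      _ ≤ -(1 / 2) * (g * (ρp - ρm)) * (ξ ^ 2 * ψ 0 ^ 2) :=
          mul_le_mul_of_nonpos_left (hψ.mul_sq_apply_zero_le hJ hρm hρ hξ) (by linarith)
      _ = ξ ^ 2 * (-(1 / 2) * (g * (ρp - ρm)) * ψ 0 ^ 2) := by ring
      _ ≤ ξ ^ 2 * E0 g ρp ρm B ξ ψ := by gcongr; exact neg_mul_sq_le_E0 g B
  have hviscous : 4 * min μp μm * ξ ^ 2 / (ρp * (16 * ξ ^ 2 + 1)) * s ≤ s * E1 μp μm ξ ψ :=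
    calc 4 * min μp μm * ξ ^ 2 / (ρp * (16 * ξ ^ 2 + 1)) * s
        = s * (2 * min μp μm * ξ ^ 2 * (2 / (ρp * (16 * ξ ^ 2 + 1)))) := by ring
      _ ≤ s * (2 * min μp μm * ξ ^ 2 * ∫ y in (-1:ℝ)..1, deriv ψ y ^ 2) := by
          have := le_min hμp hμm
          gcongr
          exact hψ.le_integral_deriv_sq hJ hρm hρ
      _ ≤ s * E1 μp μm ξ ψ := by gcongr; exact hψ.mul_integral_deriv_sq_le_E1 hμp hμm
  linarith

end Normalized

def bump (y : ℝ) : ℝ := (1 - y ^ 2) ^ 2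

lemma hasDerivAt_bump (y : ℝ) : HasDerivAt bump (-4 * y * (1 - y ^ 2)) y := by
  refine (((hasDerivAt_pow 2 y).const_sub 1).fun_pow 2).congr_deriv ?_
  push_cast
  ring

lemma adm_bump : Adm bump := by
  have hd : deriv bump = fun y => -4 * y * (1 - y ^ 2) := funext fun y => (hasDerivAt_bump y).deriv
  refine ⟨by unfold bump; fun_prop, ?_, ?_, ?_, ?_⟩ <;> simp [bump, hd]

lemma Jfun_bump_pos {ρp ρm ξ : ℝ} (hρm : 0 < ρm) (hρ : ρm ≤ ρp) (hξ : ξ ≠ 0) :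
    0 < Jfun ρp ρm ξ bump := by
  have hP : 0 < ∫ y in (-1:ℝ)..1, bump y ^ 2 := by
    refine intervalIntegral.intervalIntegral_pos_of_pos_on
      ((by unfold bump; fun_prop : Continuous fun y => bump y ^ 2).intervalIntegrable _ _)
      (fun y hy => ?_) (by norm_num)
    have : 0 < 1 - y ^ 2 := by nlinarith [hy.1, hy.2]
    unfold bump
    positivity
  have hD : 0 ≤ ∫ y in (-1:ℝ)..1, deriv bump y ^ 2 :=
    intervalIntegral.integral_nonneg (by norm_num) fun y _ => sq_nonneg _
  have := mul_le_Jfun (ξ := ξ) hρ adm_bump.differentiable.continuous adm_bump.continuous_deriv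
  have : 0 < ξ ^ 2 := by positivity
  nlinarith [mul_pos this hP]

lemma exists_adm_Jfun_eq_one {ρp ρm ξ : ℝ} (hρm : 0 < ρm) (hρ : ρm ≤ ρp) (hξ : ξ ≠ 0) :
    ∃ ψ, Adm ψ ∧ Jfun ρp ρm ξ ψ = 1 := by
  have hJ := Jfun_bump_pos hρm hρ hξ
  refine ⟨fun y => (√(Jfun ρp ρm ξ bump))⁻¹ * bump y, adm_bump.const_mul _, ?_⟩
  rw [Jfun_const_mul adm_bump.differentiable, inv_pow, Real.sq_sqrt hJ.le, inv_mul_cancel₀ hJ.ne']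

/-- there is `C₂ > 0` depending only on the densities and `g` such that for every
`ξ ≠ 0` there is `C₃ > 0` (independent of `B`) with `α(s) ≥ -C₂|ξ| + C₃ s` for all `s > 0`. -/
theorem alpha_lower_bound
    (ρp ρm g : ℝ)
    (hρm : 0 < ρm) (hρ : ρm < ρp) (hg : 0 < g) :
    ∃ C₂ : ℝ, 0 < C₂ ∧
      ∀ μp μm : ℝ, 0 < μp → 0 < μm → ∀ ξ : ℝ, ξ ≠ 0 →
        ∃ C₃ : ℝ, 0 < C₃ ∧
          ∀ B : ℝ, B ≠ 0 → ∀ s : ℝ, 0 < s →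
            -C₂ * |ξ| + C₃ * s ≤ alpha ρp ρm μp μm g B ξ s := by
  have hρp : 0 < ρp := hρm.trans hρ
  refine ⟨g * (ρp - ρm) / ρm, by have := sub_pos.2 hρ; positivity, ?_⟩
  intro μp μm hμp hμm ξ hξ
  refine ⟨4 * min μp μm * ξ ^ 2 / (ρp * (16 * ξ ^ 2 + 1)),
    by have := lt_min hμp hμm; positivity, ?_⟩
  intro B _ s hs
  obtain ⟨ψ₀, hψ₀, hJ₀⟩ := exists_adm_Jfun_eq_one hρm hρ.le hξ
  refine le_csInf ⟨_, ψ₀, hψ₀, hJ₀, rfl⟩ ?_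
  rintro _ ⟨ψ, hψ, hJ, rfl⟩
  exact hψ.energy_ge hJ hρm hρ.le hg.le hμp.le hμm.le hξ hs.le

end
end

section
/- Coercivity for the vertical field on the slab: suppose |B| > |B|_c. Then there exists a constant C > 0, depending only on B, g and [ρ], such that for every continuously differentiable vector field v = (v₁, v₂) : ℝ × [−1,1] → ℝ² with v(x₁, −1) = v(x₁, 1) = 0 for all x₁ ∈ ℝ and with v and its first-order partial derivatives square-integrable on Ω = ℝ × (−1,1), one has B²∫_Ω |∂₂v|² dx − g[ρ]∫_ℝ v₂(x₁, 0)² dx₁ ≥ C ( ∫_Ω |v|² dx + ∫_Ω |∂₂v|² dx ). -/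
open MeasureTheory Set Filter Topology

noncomputable section

/-- Partial derivative in the first (horizontal) variable. -/
def pd1 (f : ℝ × ℝ → ℝ) (x : ℝ × ℝ) : ℝ := deriv (fun t => f (t, x.2)) x.1

/-- Partial derivative in the second (vertical) variable. -/
def pd2 (f : ℝ × ℝ → ℝ) (x : ℝ × ℝ) : ℝ := deriv (fun t => f (x.1, t)) x.2

/-- The infinite slab `Ω = ℝ × (-1,1)`. -/
def Slab : Set (ℝ × ℝ) := {x : ℝ × ℝ | x.2 ∈ Ioo (-1:ℝ) 1}

/-! Fix `x₁` and look at the vertical slices `y ↦ vᵢ(x₁, y)` on `[-1, 1]`. Both vanish at `y = -1`,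
so the fundamental theorem of calculus and Cauchy–Schwarz give the Poincaré inequality
`∫ φ² ≤ 4 ∫ φ'²`. The second one also vanishes at `y = 1`; extended from `[-1, 1]` to a Lipschitz
function on `ℝ` it is admissible in the definition of `|B|_c`, whence `g[ρ] φ(0)² ≤ Bc² ∫ φ'²`.
Integrating in `x₁` (Fubini) gives `∫ |v|² ≤ 4 ∫ |∂₂v|²` and `g[ρ] ∫ v₂(x₁, 0)² ≤ Bc² ∫ |∂₂v|²`,
so `C = (B² - Bc²) / 5` works. -/

lemma sq_setIntegral_le_measureReal_mul {α : Type*} [MeasurableSpace α] {μ : Measure α}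
    {s : Set α} {f : α → ℝ} (hs : μ s ≠ ⊤) (hf : IntegrableOn f s μ)
    (hf2 : IntegrableOn (fun x => f x ^ 2) s μ) :
    (∫ x in s, f x ∂μ) ^ 2 ≤ μ.real s * ∫ x in s, f x ^ 2 ∂μ := by
  rcases eq_or_ne (μ s) 0 with h0 | h0
  · simp [Measure.restrict_eq_zero.mpr h0]
  have hpos : 0 < μ.real s := ENNReal.toReal_pos h0 hs
  have hJensen := even_two.convexOn_pow.map_set_average_le (continuous_pow 2).continuousOn
    isClosed_univ h0 hs (ae_of_all _ fun x => mem_univ (f x)) hf hf2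
  rw [setAverage_eq, setAverage_eq, smul_eq_mul, smul_eq_mul, mul_pow, inv_pow,
    ← div_eq_inv_mul, ← div_eq_inv_mul, div_le_div_iff₀ (by positivity) hpos] at hJensen
  nlinarith

lemma setIntegral_Ioo_eq_intervalIntegral {f : ℝ → ℝ} {a b : ℝ} (hab : a ≤ b) :
    ∫ x in Ioo a b, f x = ∫ x in a..b, f x := by
  rw [intervalIntegral.integral_of_le hab, integral_Ioc_eq_integral_Ioo]

lemma sq_le_mul_intervalIntegral_deriv_sq {φ : ℝ → ℝ} (hφ : ContDiff ℝ 1 φ) {a b y : ℝ}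
    (ha : φ a = 0) (hy : y ∈ Icc a b) :
    φ y ^ 2 ≤ (b - a) * ∫ t in a..b, deriv φ t ^ 2 := by
  have hφ' : Continuous (deriv φ) := hφ.continuous_deriv le_rfl
  have hftc : φ y = ∫ t in a..y, deriv φ t := by
    rw [intervalIntegral.integral_deriv_eq_sub (fun x _ => (hφ.differentiable one_ne_zero) x)
      (hφ'.intervalIntegrable a y), ha, sub_zero]
  have hmono : ∫ t in a..y, deriv φ t ^ 2 ≤ ∫ t in a..b, deriv φ t ^ 2 :=
    intervalIntegral.integral_mono_interval le_rfl hy.1 hy.2 (ae_of_all _ fun t => sq_nonneg _)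
      ((hφ'.pow 2).intervalIntegrable a b)
  have hcs : (∫ t in a..y, deriv φ t) ^ 2 ≤ (y - a) * ∫ t in a..y, deriv φ t ^ 2 := by
    simp only [intervalIntegral.integral_of_le hy.1]
    simpa [Real.volume_real_Ioc_of_le hy.1] using sq_setIntegral_le_measureReal_mul
      (μ := volume) (s := Ioc a y) measure_Ioc_lt_top.ne hφ'.integrableOn_Ioc
      (hφ'.pow 2).integrableOn_Ioc
  have h0 : 0 ≤ ∫ t in a..y, deriv φ t ^ 2 :=
    intervalIntegral.integral_nonneg hy.1 fun t _ => sq_nonneg _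
  calc φ y ^ 2 ≤ (y - a) * ∫ t in a..y, deriv φ t ^ 2 := hftc ▸ hcs
    _ ≤ (b - a) * ∫ t in a..b, deriv φ t ^ 2 :=
      mul_le_mul (by linarith [hy.2]) hmono h0 (by linarith [hy.1, hy.2])

lemma intervalIntegral_sq_le_mul_intervalIntegral_deriv_sq {φ : ℝ → ℝ} (hφ : ContDiff ℝ 1 φ)
    {a b : ℝ} (hab : a ≤ b) (ha : φ a = 0) :
    ∫ t in a..b, φ t ^ 2 ≤ (b - a) ^ 2 * ∫ t in a..b, deriv φ t ^ 2 := by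
  calc ∫ t in a..b, φ t ^ 2 ≤ ∫ _ in a..b, (b - a) * ∫ t in a..b, deriv φ t ^ 2 :=
        intervalIntegral.integral_mono_on hab ((hφ.continuous.pow 2).intervalIntegrable a b)
          intervalIntegrable_const fun y hy => sq_le_mul_intervalIntegral_deriv_sq hφ ha hy
    _ = (b - a) ^ 2 * ∫ t in a..b, deriv φ t ^ 2 := by
      rw [intervalIntegral.integral_const, smul_eq_mul]; ring

lemma ContDiff.exists_lipschitzWith_eqOn {φ : ℝ → ℝ} (hφ : ContDiff ℝ 1 φ) {s : Set ℝ}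
    (hs : IsCompact s) : ∃ ψ : ℝ → ℝ, (∃ K, LipschitzWith K ψ) ∧ EqOn φ ψ s := by
  obtain ⟨K, hK⟩ := hφ.locallyLipschitz.locallyLipschitzOn.exists_lipschitzOnWith_of_compact hs
  obtain ⟨ψ, hψ, hφψ⟩ := hK.extend_real
  exact ⟨ψ, ⟨K, hψ⟩, hφψ⟩

lemma mul_sq_le_of_mem_upperBounds_BcSet {g ρp ρm c : ℝ} (hc : c ∈ upperBounds (BcSet g ρp ρm))
    (hc0 : 0 ≤ c) {φ : ℝ → ℝ} (hφ : ContDiff ℝ 1 φ) (hφ₁ : φ (-1) = 0) (hφ₂ : φ 1 = 0) :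
    g * (ρp - ρm) * φ 0 ^ 2 ≤ c * ∫ y in (-1:ℝ)..1, deriv φ y ^ 2 := by
  set I := ∫ y in (-1:ℝ)..1, deriv φ y ^ 2
  rcases eq_or_ne (φ 0) 0 with h0 | h0
  · rw [h0]
    simpa using mul_nonneg hc0
      (intervalIntegral.integral_nonneg (by norm_num) fun y _ => sq_nonneg (deriv φ y))
  have hI : 0 < I := by
    have hφ0 := sq_le_mul_intervalIntegral_deriv_sq hφ hφ₁ (show (0:ℝ) ∈ Icc (-1) 1 by norm_num)
    have hφ0_pos : 0 < φ 0 ^ 2 := by positivity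
    linarith
  obtain ⟨ψ, ⟨K, hψ⟩, hφψ⟩ := hφ.exists_lipschitzWith_eqOn isCompact_Icc
  have hψ_apply (y : ℝ) (hy : y ∈ Icc (-1:ℝ) 1) : ψ y = φ y := (hφψ hy).symm
  have hψ_deriv : ∫ y in (-1:ℝ)..1, deriv ψ y ^ 2 = I := by
    simp only [I, ← setIntegral_Ioo_eq_intervalIntegral (show (-1:ℝ) ≤ 1 by norm_num)]
    refine setIntegral_congr_fun measurableSet_Ioo fun y hy => ?_
    rw [(hφψ.eventuallyEq_of_mem (Icc_mem_nhds hy.1 hy.2)).deriv_eq]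
  have hψ_ne : ¬ ∀ᵐ y ∂(volume.restrict (Icc (-1:ℝ) 1)), ψ y = 0 := fun hae => by
    have hψ0 := Measure.eqOn_of_ae_eq hae hψ.continuous.continuousOn continuousOn_const
      (closure_interior_Icc (by norm_num)).ge (show (0:ℝ) ∈ Icc (-1) 1 by norm_num)
    exact h0 (by rwa [hψ_apply 0 (by norm_num)] at hψ0)
  have hmem : g * (ρp - ρm) * φ 0 ^ 2 / I ∈ BcSet g ρp ρm :=
    ⟨ψ, ⟨K, hψ⟩, by rw [hψ_apply _ (by norm_num), hφ₁], by rw [hψ_apply _ (by norm_num), hφ₂],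
      hψ_ne, by rw [hψ_deriv, hψ_apply 0 (by norm_num)]⟩
  exact (div_le_iff₀ hI).mp (hc hmem)

lemma volume_restrict_slab :
    volume.restrict Slab = volume.prod (volume.restrict (Ioo (-1:ℝ) 1)) := by
  rw [show Slab = univ ×ˢ Ioo (-1:ℝ) 1 by ext; simp [Slab], Measure.volume_eq_prod,
    ← Measure.prod_restrict, Measure.restrict_univ]

lemma integral_le_mul_integral_prod {α β : Type*} [MeasurableSpace α] [MeasurableSpace β]
    {μ : Measure α} {ν : Measure β} [SFinite μ] [SFinite ν] {f : α → ℝ} {F : α × β → ℝ}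
    {c : ℝ} (hf : 0 ≤ f) (hF : Integrable F (μ.prod ν))
    (hfF : ∀ x, f x ≤ c * ∫ y, F (x, y) ∂ν) :
    ∫ x, f x ∂μ ≤ c * ∫ z, F z ∂(μ.prod ν) := by
  rw [integral_prod F hF, ← integral_const_mul]
  exact integral_mono_of_nonneg (ae_of_all _ hf) (hF.integral_prod_left.const_mul c)
    (ae_of_all _ hfF)

lemma integral_Ioo_sq_add_sq_le {φ ψ : ℝ → ℝ} (hφ : ContDiff ℝ 1 φ) (hψ : ContDiff ℝ 1 ψ)
    (hφ₁ : φ (-1) = 0) (hψ₁ : ψ (-1) = 0) :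
    ∫ y in Ioo (-1:ℝ) 1, (φ y ^ 2 + ψ y ^ 2) ≤
      4 * ∫ y in Ioo (-1:ℝ) 1, (deriv φ y ^ 2 + deriv ψ y ^ 2) := by
  have hφ' := hφ.continuous_deriv le_rfl
  have hψ' := hψ.continuous_deriv le_rfl
  have h := add_le_add
    (intervalIntegral_sq_le_mul_intervalIntegral_deriv_sq hφ (b := 1) (by norm_num) hφ₁)
    (intervalIntegral_sq_le_mul_intervalIntegral_deriv_sq hψ (b := 1) (by norm_num) hψ₁)
  rw [setIntegral_Ioo_eq_intervalIntegral (by norm_num),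
    setIntegral_Ioo_eq_intervalIntegral (by norm_num),
    intervalIntegral.integral_add (f := fun t => φ t ^ 2) (g := fun t => ψ t ^ 2)
      ((hφ.continuous.pow 2).intervalIntegrable _ _)
      ((hψ.continuous.pow 2).intervalIntegrable _ _),
    intervalIntegral.integral_add (f := fun t => deriv φ t ^ 2) (g := fun t => deriv ψ t ^ 2)
      ((hφ'.pow 2).intervalIntegrable _ _) ((hψ'.pow 2).intervalIntegrable _ _)]
  norm_num at h
  linarith

lemma mul_sq_le_integral_Ioo_deriv_sq_add {g ρp ρm c : ℝ}
    (hc : c ∈ upperBounds (BcSet g ρp ρm)) (hc0 : 0 ≤ c) {φ ψ : ℝ → ℝ}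
    (hφ : ContDiff ℝ 1 φ) (hψ : ContDiff ℝ 1 ψ)
    (hψ₁ : ψ (-1) = 0) (hψ₂ : ψ 1 = 0) :
    g * (ρp - ρm) * ψ 0 ^ 2 ≤ c * ∫ y in Ioo (-1:ℝ) 1, (deriv φ y ^ 2 + deriv ψ y ^ 2) := by
  have hφ' := hφ.continuous_deriv le_rfl
  have hψ' := hψ.continuous_deriv le_rfl
  calc g * (ρp - ρm) * ψ 0 ^ 2 ≤ c * ∫ y in (-1:ℝ)..1, deriv ψ y ^ 2 :=
        mul_sq_le_of_mem_upperBounds_BcSet hc hc0 hψ hψ₁ hψ₂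
    _ ≤ c * ∫ y in Ioo (-1:ℝ) 1, (deriv φ y ^ 2 + deriv ψ y ^ 2) := by
      rw [setIntegral_Ioo_eq_intervalIntegral (by norm_num)]
      gcongr
      refine intervalIntegral.integral_mono_on (by norm_num) ((hψ'.pow 2).intervalIntegrable _ _)
        (((hφ'.pow 2).add (hψ'.pow 2)).intervalIntegrable _ _) fun y _ => ?_
      linarith [sq_nonneg (deriv φ y)]

lemma sSup_mem_upperBounds_of_pos {S : Set ℝ} (hS : 0 < sSup S) : sSup S ∈ upperBounds S :=
  fun _ hr => le_csSup (not_not.mp fun h => hS.ne' (Real.sSup_of_not_bddAbove h)) hr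

theorem vertical_coercivity_general
    (ρp ρm g B Bc : ℝ)
    (hρ : ρm < ρp) (hg : 0 < g)
    (hBc : 0 < Bc) (hBcsq : Bc ^ 2 = sSup (BcSet g ρp ρm))
    (hBgt : Bc < |B|) :
    ∃ C : ℝ, 0 < C ∧
      ∀ v : ℝ × ℝ → ℝ × ℝ, ContDiff ℝ 1 v →
        (∀ x₁ : ℝ, v (x₁, -1) = 0) → (∀ x₁ : ℝ, v (x₁, 1) = 0) →
        IntegrableOn (fun x => ((v x).1) ^ 2 + ((v x).2) ^ 2) Slab volume →
        IntegrableOn (fun x => (pd1 (fun z => (v z).1) x) ^ 2 + (pd1 (fun z => (v z).2) x) ^ 2)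
          Slab volume →
        IntegrableOn (fun x => (pd2 (fun z => (v z).1) x) ^ 2 + (pd2 (fun z => (v z).2) x) ^ 2)
          Slab volume →
        C * ((∫ x in Slab, (((v x).1) ^ 2 + ((v x).2) ^ 2)) +
              ∫ x in Slab, ((pd2 (fun z => (v z).1) x) ^ 2 + (pd2 (fun z => (v z).2) x) ^ 2)) ≤
          B ^ 2 * (∫ x in Slab,
              ((pd2 (fun z => (v z).1) x) ^ 2 + (pd2 (fun z => (v z).2) x) ^ 2)) -
            g * (ρp - ρm) * ∫ x₁ : ℝ, ((v (x₁, 0)).2) ^ 2 := by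
  have hBc_ub : Bc ^ 2 ∈ upperBounds (BcSet g ρp ρm) :=
    hBcsq ▸ sSup_mem_upperBounds_of_pos (hBcsq ▸ by positivity)
  have hBB : Bc ^ 2 < B ^ 2 := sq_abs B ▸ pow_lt_pow_left₀ hBgt hBc.le two_ne_zero
  refine ⟨(B ^ 2 - Bc ^ 2) / 5, by linarith, fun v hv hv₁ hv₂ hF _ hD => ?_⟩
  rw [IntegrableOn, volume_restrict_slab] at hF hD
  rw [volume_restrict_slab, integral_prod _ hF]
  have hslice (x₁ : ℝ) (i : ℝ × ℝ → ℝ) (hi : ContDiff ℝ 1 i) :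
      ContDiff ℝ 1 fun y => i (v (x₁, y)) := by fun_prop
  have hpoincare := integral_le_mul_integral_prod (c := 4)
    (fun x₁ => integral_nonneg fun _ => by positivity) hD fun x₁ =>
      integral_Ioo_sq_add_sq_le (hslice x₁ _ contDiff_fst) (hslice x₁ _ contDiff_snd)
        (by simp [hv₁]) (by simp [hv₁])
  have htrace := integral_le_mul_integral_prod (c := Bc ^ 2)
    (fun x₁ => mul_nonneg (mul_nonneg hg.le (sub_nonneg.mpr hρ.le)) (sq_nonneg _)) hD fun x₁ =>
      mul_sq_le_integral_Ioo_deriv_sq_add hBc_ub (sq_nonneg _) (hslice x₁ _ contDiff_fst)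
        (hslice x₁ _ contDiff_snd) (by simp [hv₁]) (by simp [hv₂])
  rw [integral_const_mul] at htrace
  have hD₀ : 0 ≤ ∫ x, pd2 (fun z => (v z).1) x ^ 2 + pd2 (fun z => (v z).2) x ^ 2
      ∂(volume.prod (volume.restrict (Ioo (-1:ℝ) 1))) := integral_nonneg fun _ => by positivity
  nlinarith

/-- coercivity for the vertical field: if `|B| > |B|_c` then there is `C > 0`
(depending only on `B`, `g`, `[ρ]`) such that for every `C¹` vector field `v` on the slab,
vanishing on the fixed boundaries and square integrable together with its first derivatives,
`B²∫_Ω |∂₂v|² - g[ρ]∫_ℝ v₂(x₁,0)² ≥ C(∫_Ω |v|² + ∫_Ω |∂₂v|²)`. -/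
theorem vertical_coercivity
    (ρp ρm g B Bc : ℝ)
    (hρm : 0 < ρm) (hρ : ρm < ρp) (hg : 0 < g)
    (hB : B ≠ 0) (hBc : 0 < Bc) (hBcsq : Bc ^ 2 = sSup (BcSet g ρp ρm))
    (hBgt : Bc < |B|) :
    ∃ C : ℝ, 0 < C ∧
      ∀ v : ℝ × ℝ → ℝ × ℝ, ContDiff ℝ 1 v →
        (∀ x₁ : ℝ, v (x₁, -1) = 0) → (∀ x₁ : ℝ, v (x₁, 1) = 0) →
        IntegrableOn (fun x => ((v x).1) ^ 2 + ((v x).2) ^ 2) Slab volume →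
        IntegrableOn (fun x => (pd1 (fun z => (v z).1) x) ^ 2 + (pd1 (fun z => (v z).2) x) ^ 2)
          Slab volume →
        IntegrableOn (fun x => (pd2 (fun z => (v z).1) x) ^ 2 + (pd2 (fun z => (v z).2) x) ^ 2)
          Slab volume →
        C * ((∫ x in Slab, (((v x).1) ^ 2 + ((v x).2) ^ 2)) +
              ∫ x in Slab, ((pd2 (fun z => (v z).1) x) ^ 2 + (pd2 (fun z => (v z).2) x) ^ 2)) ≤
          B ^ 2 * (∫ x in Slab,
              ((pd2 (fun z => (v z).1) x) ^ 2 + (pd2 (fun z => (v z).2) x) ^ 2)) -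
            g * (ρp - ρm) * ∫ x₁ : ℝ, ((v (x₁, 0)).2) ^ 2 :=
  vertical_coercivity_general ρp ρm g B Bc hρ hg hBc hBcsq hBgt

end
end

section
/- Conservation of the Lagrangian magnetic field: let d ≥ 1, let η : ℝ × ℝ^d → ℝ^d be C² in (t, x) with spatial Jacobian matrix Dη(t, x) (entries (Dη)_{ij} = ∂η_i/∂x_j) invertible for all (t, x), set v := ∂_t η, and let b : ℝ × ℝ^d → ℝ^d be differentiable in t and satisfy the transport law ∂_t b(t, x) = D_x v(t, x) · ( (Dη(t, x))⁻¹ b(t, x) ) for all (t, x) (componentwise, ∂_t b_i = Σ_{j,k} b_j A_{jk} ∂_k v_i with A := ((Dη)⁻¹)ᵀ). Then for every x the vector (Dη(t, x))⁻¹ b(t, x) is independent of t; i.e., (Dη(t, x))⁻¹ b(t, x) = (Dη(0, x))⁻¹ b(0, x) for all t. -/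
/-!
Since mixed partial derivatives of the `C²` map `η` commute, `M(t) := Dη(t, x)` satisfies
`M' = D_x v`. Writing `b = M w` with `w := M⁻¹ b`, the product rule gives `b' = M' w + M w'`,
while the transport law says exactly `b' = M' w`. Hence `M w' = 0`, so `w' = 0` because `M` is
invertible, and `w` is constant in time.
-/

open Matrix

section PartialDerivatives

variable {E F : Type*} [NormedAddCommGroup E] [NormedSpace ℝ E]
  [NormedAddCommGroup F] [NormedSpace ℝ F] {f : ℝ × E → F} {t : ℝ} {x : E}

theorem hasDerivAt_partial_left (hf : DifferentiableAt ℝ f (t, x)) :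
    HasDerivAt (fun s => f (s, x)) (fderiv ℝ f (t, x) (1, 0)) t :=
  hf.hasFDerivAt.comp_hasDerivAt t ((hasDerivAt_id t).prodMk (hasDerivAt_const t x))

theorem hasFDerivAt_partial_right (hf : DifferentiableAt ℝ f (t, x)) :
    HasFDerivAt (fun y => f (t, y)) ((fderiv ℝ f (t, x)).comp (.inr ℝ ℝ E)) x :=
  hf.hasFDerivAt.comp x ((hasFDerivAt_const t x).prodMk (hasFDerivAt_id x))

theorem hasDerivAt_fderiv_partial_right (hf : ContDiff ℝ 2 f) (t : ℝ) (x : E) :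
    HasDerivAt (fun s => fderiv ℝ (fun y => f (s, y)) x)
      (fderiv ℝ (fun y => deriv (fun s => f (s, y)) t) x) t := by
  have hf₁ : Differentiable ℝ f := hf.differentiable two_ne_zero
  have hf₂ : Differentiable ℝ (fderiv ℝ f) :=
    (hf.fderiv_right one_add_one_eq_two.le).differentiable one_ne_zero
  have h_partial_right : (fun s => fderiv ℝ (fun y => f (s, y)) x) =
      fun s => (fderiv ℝ f (s, x)).comp (.inr ℝ ℝ E) :=
    funext fun s => (hasFDerivAt_partial_right (hf₁ _)).fderiv
  have h_partial_left : (fun y => deriv (fun s => f (s, y)) t) =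
      fun y => fderiv ℝ f (t, y) (1, 0) :=
    funext fun y => (hasDerivAt_partial_left (hf₁ _)).deriv
  have h_symm : IsSymmSndFDerivAt ℝ f (t, x) :=
    hf.contDiffAt.isSymmSndFDerivAt (by simp)
  rw [h_partial_right, h_partial_left,
    (((hasFDerivAt_partial_right (hf₂ _)).clm_apply (hasFDerivAt_const _ x))).fderiv]
  convert (hasDerivAt_partial_left (hf₂ _)).clm_comp (hasDerivAt_const t (.inr ℝ ℝ E)) using 1
  ext v
  simp [h_symm (1, 0) (0, v)]

end PartialDerivatives

section MatrixCurves

variable {m n : Type*} [Fintype n]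

theorem hasDerivAt_mulVec {M : ℝ → Matrix m n ℝ} {M' : Matrix m n ℝ} {w : ℝ → n → ℝ}
    {w' : n → ℝ} {t : ℝ} (hM : ∀ i j, HasDerivAt (fun s => M s i j) (M' i j) t)
    (hw : HasDerivAt w w' t) :
    HasDerivAt (fun s => M s *ᵥ w s) (M' *ᵥ w t + M t *ᵥ w') t := by
  refine hasDerivAt_pi.2 fun i => ?_
  simp only [Pi.add_apply, mulVec, dotProduct, ← Finset.sum_add_distrib]
  exact HasDerivAt.fun_sum fun j _ => (hM i j).mul (hasDerivAt_pi.1 hw j)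

variable [DecidableEq n] {M : ℝ → Matrix n n ℝ}

theorem differentiable_det (hM : ∀ i j, Differentiable ℝ fun s => M s i j) :
    Differentiable ℝ fun s => (M s).det := by
  simp only [det_apply']
  exact Differentiable.fun_sum fun σ _ =>
    (Differentiable.fun_finsetProd fun i _ => hM (σ i) i).const_mul _

theorem differentiable_inv_apply (hM : ∀ i j, Differentiable ℝ fun s => M s i j)
    (hdet : ∀ s, IsUnit (M s).det) (i j : n) :
    Differentiable ℝ fun s => (M s)⁻¹ i j := by
  have h_adjugate : Differentiable ℝ fun s => (M s).adjugate i j := by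
    simp only [adjugate_apply]
    refine differentiable_det fun k l => ?_
    simp only [updateRow_apply]
    split_ifs
    exacts [differentiable_const _, hM k l]
  simp only [inv_def, Matrix.smul_apply, Ring.inverse_eq_inv', smul_eq_mul]
  exact ((differentiable_det hM).inv fun s => (hdet s).ne_zero).mul h_adjugate

theorem inv_mulVec_eq_of_hasDerivAt {M' : ℝ → Matrix n n ℝ} {c : ℝ → n → ℝ}
    (hM : ∀ s i j, HasDerivAt (fun s => M s i j) (M' s i j) s)
    (hdet : ∀ s, IsUnit (M s).det)
    (hc : ∀ s, HasDerivAt c (M' s *ᵥ ((M s)⁻¹ *ᵥ c s)) s) (t t' : ℝ) :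
    (M t)⁻¹ *ᵥ c t = (M t')⁻¹ *ᵥ c t' := by
  set w := fun s => (M s)⁻¹ *ᵥ c s
  have hw : Differentiable ℝ w := fun s =>
    (hasDerivAt_mulVec (fun i j => ((differentiable_inv_apply
      (fun i j s => (hM s i j).differentiableAt) hdet i j) s).hasDerivAt) (hc s)).differentiableAt
  have hMw : (fun s => M s *ᵥ w s) = c := funext fun s => by
    simp [w, mulVec_mulVec, mul_nonsing_inv _ (hdet s)]
  refine is_const_of_deriv_eq_zero hw (fun s => ?_) t t'
  have h_product := hasDerivAt_mulVec (hM s) (hw s).hasDerivAt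
  rw [hMw] at h_product
  have h_ker : M s *ᵥ deriv w s = 0 := by
    simpa [w] using ((hc s).unique h_product).symm
  simpa [mulVec_mulVec, nonsing_inv_mul _ (hdet s)] using congrArg ((M s)⁻¹ *ᵥ ·) h_ker

end MatrixCurves

theorem lagrangian_magnetic_field_conserved_general
    (d : ℕ)
    (η b : ℝ × (Fin d → ℝ) → (Fin d → ℝ))
    (hη : ContDiff ℝ 2 η)
    (Dη : ℝ → (Fin d → ℝ) → Matrix (Fin d) (Fin d) ℝ)
    (hDη : ∀ (t : ℝ) (x : Fin d → ℝ) (i j : Fin d),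
      Dη t x i j = fderiv ℝ (fun y => η (t, y) i) x (Pi.single j 1))
    (hinv : ∀ (t : ℝ) (x : Fin d → ℝ), IsUnit (Dη t x).det)
    (v : ℝ × (Fin d → ℝ) → (Fin d → ℝ))
    (hv : ∀ (t : ℝ) (x : Fin d → ℝ), v (t, x) = deriv (fun s => η (s, x)) t)
    (hb : ∀ (t : ℝ) (x : Fin d → ℝ) (i : Fin d),
      HasDerivAt (fun s => b (s, x) i)
        (∑ j : Fin d, ∑ k : Fin d,
          b (t, x) j * (Dη t x)⁻¹ k j * fderiv ℝ (fun y => v (t, y) i) x (Pi.single k 1)) t) :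
    ∀ (t : ℝ) (x : Fin d → ℝ),
      ((Dη t x)⁻¹).mulVec (b (t, x)) = ((Dη 0 x)⁻¹).mulVec (b (0, x)) := by
  have hv_apply : ∀ t i, (fun y => v (t, y) i) = fun y => deriv (fun s => η (s, y) i) t := by
    intro t i
    ext y
    have hη_t := hasDerivAt_partial_left (hη.differentiable two_ne_zero (t, y))
    rw [hv, hη_t.deriv, (hasDerivAt_pi.1 hη_t i).deriv]
  have hDη_deriv : ∀ t x i j, HasDerivAt (fun s => Dη s x i j)
      (fderiv ℝ (fun y => v (t, y) i) x (Pi.single j 1)) t := by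
    intro t x i j
    simp only [hDη, hv_apply]
    exact (hasDerivAt_fderiv_partial_right (contDiff_pi.1 hη i) t x).clm_apply
      (hasDerivAt_const t _) |>.congr_deriv (by simp)
  intro t x
  refine inv_mulVec_eq_of_hasDerivAt (hDη_deriv · x) (hinv · x)
    (fun s => hasDerivAt_pi.2 fun i => (hb s x i).congr_deriv ?_) t 0
  simp only [mulVec, dotProduct, Finset.mul_sum]
  rw [Finset.sum_comm]
  exact Finset.sum_congr rfl fun k _ => Finset.sum_congr rfl fun j _ => by ring

/-- conservation of the Lagrangian magnetic field.  If `η` is a `C²` flow map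
with invertible spatial Jacobian `Dη` (entries `(Dη)_{ij} = ∂η_i/∂x_j`), `v = ∂_t η`, and `b`
satisfies the transport law `∂_t b_i = Σ_{j,k} b_j A_{jk} ∂_k v_i` with `A = ((Dη)⁻¹)ᵀ`, then
`(Dη(t,x))⁻¹ b(t,x)` is independent of `t`. -/
theorem lagrangian_magnetic_field_conserved
    (d : ℕ) (hd : 1 ≤ d)
    (η b : ℝ × (Fin d → ℝ) → (Fin d → ℝ))
    (hη : ContDiff ℝ 2 η)
    (Dη : ℝ → (Fin d → ℝ) → Matrix (Fin d) (Fin d) ℝ)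
    (hDη : ∀ (t : ℝ) (x : Fin d → ℝ) (i j : Fin d),
      Dη t x i j = fderiv ℝ (fun y => η (t, y) i) x (Pi.single j 1))
    (hinv : ∀ (t : ℝ) (x : Fin d → ℝ), IsUnit (Dη t x).det)
    (v : ℝ × (Fin d → ℝ) → (Fin d → ℝ))
    (hv : ∀ (t : ℝ) (x : Fin d → ℝ), v (t, x) = deriv (fun s => η (s, x)) t)
    (hb : ∀ (t : ℝ) (x : Fin d → ℝ) (i : Fin d),
      HasDerivAt (fun s => b (s, x) i)
        (∑ j : Fin d, ∑ k : Fin d,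
          b (t, x) j * (Dη t x)⁻¹ k j * fderiv ℝ (fun y => v (t, y) i) x (Pi.single k 1)) t) :
    ∀ (t : ℝ) (x : Fin d → ℝ),
      ((Dη t x)⁻¹).mulVec (b (t, x)) = ((Dη 0 x)⁻¹).mulVec (b (0, x)) :=
  lagrangian_magnetic_field_conserved_general d η b hη Dη hDη hinv v hv hb
end
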